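/- If X is (ω^d·(min X + 1), k, i)-persistent, then X is (ω^{d+1}, k, i)-persistent. -/

import Mathlib

open Finset

/-- Minimum of a finite set of naturals (0 for the empty set). -/
def fmin (X : Finset ℕ) : ℕ := X.min.untopD 0

/-- Maximum of a finite set of naturals (0 for the empty set). -/
def fmax (X : Finset ℕ) : ℕ := X.max.unbotD 0

/-- `OmegaLarge d X` : `X` is ω^d-large (for `d ≥ 1`; `OmegaLarge 0` means nonempty).
`X` is ω^{d+1}-large iff `X = {min X} ∪ ⋃_{m < min X} X_m` where the `X_m` form a
stack (each max below the next min) of ω^d-large sets all above `min X`. -/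
def OmegaLarge : ℕ → Finset ℕ → Prop
  | 0, X => X.Nonempty
  | d+1, X => X.Nonempty ∧ ∃ f : ℕ → Finset ℕ,
      (∀ m < fmin X, OmegaLarge d (f m)) ∧
      (∀ m, m + 1 < fmin X → fmax (f m) < fmin (f (m+1))) ∧
      (∀ m < fmin X, fmin X < fmin (f m)) ∧
      X = insert (fmin X) ((Finset.range (fmin X)).biUnion f)

/-- `OmegaMulLarge d n X` : `X` is ω^d·n-large, i.e. a union of a stack of `n`
ω^d-large sets. -/
def OmegaMulLarge (d n : ℕ) (X : Finset ℕ) : Prop :=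
  ∃ f : ℕ → Finset ℕ,
    (∀ m < n, OmegaLarge d (f m)) ∧
    (∀ m, m + 1 < n → fmax (f m) < fmin (f (m+1))) ∧
    X = (Finset.range n).biUnion f

/-- A (finite) binary tree: a set of binary strings closed under initial segments. -/
def IsTree (T : Finset (List Bool)) : Prop :=
  ∀ σ ∈ T, ∀ τ : List Bool, τ <+: σ → τ ∈ T

/-- `level T x` is `T ∩ 2^x`, the set of strings in `T` of length `x`. -/
def level (T : Finset (List Bool)) (x : ℕ) : Finset (List Bool) :=
  T.filter (fun σ => σ.length = x)

/-- Two strings are compatible if one is an initial segment of the other. -/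
def Compat (σ τ : List Bool) : Prop := σ <+: τ ∨ τ <+: σ

instance (σ τ : List Bool) : Decidable (Compat σ τ) := by
  unfold Compat; infer_instance

/-- `T_ρ` : the elements of `T` compatible with `ρ`. -/
def Tsub (T : Finset (List Bool)) (ρ : List Bool) : Finset (List Bool) :=
  T.filter (fun σ => Compat σ ρ)

/-- `x` and `z` are consecutive elements of `X`. -/
def Consec (X : Finset ℕ) (x z : ℕ) : Prop :=
  x ∈ X ∧ z ∈ X ∧ x < z ∧ ∀ y ∈ X, y ≤ x ∨ z ≤ y

/-- `T` is `X`-quasistrong: `T` is a tree meeting every level in `X`, and every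
node at a level of `X` has exactly two (necessarily incompatible) extensions at
the next level of `X`. -/
def QuasiStrong (X : Finset ℕ) (T : Finset (List Bool)) : Prop :=
  IsTree T ∧ (∀ x ∈ X, (level T x).Nonempty) ∧
  ∀ x z, Consec X x z → ∀ σ ∈ level T x,
    ((level T z).filter (fun τ => σ <+: τ)).card = 2

/-- `σ` is a leaf (maximal element) of `S`. -/
def IsLeaf (S : Finset (List Bool)) (σ : List Bool) : Prop :=
  σ ∈ S ∧ ∀ τ ∈ S, σ <+: τ → τ = σ

/-- `S` is `(C,Y)`-prehomogeneous for color `c`. -/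
def PrehomFor (C : List Bool → ℕ) (Y : Finset ℕ) (S : Finset (List Bool)) (c : ℕ) : Prop :=
  ∀ x z, Consec Y x z → ∀ σ ∈ level S x, ∀ τ ∈ level S z, σ <+: τ →
    ∃ ζ ∈ S, σ <+: ζ ∧ ζ <+: τ ∧ C ζ = c

/-- `S` is `(C,Y)`-prehomogeneous (for some color). -/
def Prehom (C : List Bool → ℕ) (Y : Finset ℕ) (S : Finset (List Bool)) : Prop :=
  ∃ c, PrehomFor C Y S c

/-- The main clause of persistence: for every `X`-quasistrong tree `T` and every
`k`-coloring `C` of the leaves `T ∩ 2^{max X}`, there are a color `c < k` and a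
`Y`-quasistrong subtree `S ⊆ T` each of whose leaves has an extension in `C⁻¹(c)`. -/
def PersClause (k : ℕ) (X Y : Finset ℕ) : Prop :=
  ∀ T : Finset (List Bool), QuasiStrong X T →
    ∀ C : List Bool → ℕ, (∀ σ ∈ level T (fmax X), C σ < k) →
      ∃ c < k, ∃ S ⊆ T, QuasiStrong Y S ∧
        ∀ σ, IsLeaf S σ → ∃ τ ∈ level T (fmax X), σ <+: τ ∧ C τ = c

/-- `Persistent d n k i X` : `X` is `(ω^d·n, k, i)`-persistent. -/
def Persistent (d n k : ℕ) : ℕ → Finset ℕ → Prop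
  | 0, X => OmegaMulLarge d n X
  | i+1, X => ∃ Y, Y ⊆ X ∧ Persistent d n k i Y ∧ PersClause k X Y

/-- `SuperPersistent d n k i X` : `X` is `(ω^d·n, k, i)`-superpersistent. -/
def SuperPersistent (d n k i : ℕ) (X : Finset ℕ) : Prop :=
  ∀ T : List Bool → Finset (List Bool),
    (∀ ρ : List Bool, ρ.length = fmin X →
      QuasiStrong X (T ρ) ∧ ∀ σ ∈ T ρ, Compat σ ρ) →
    ∀ C : List Bool → ℕ, (∀ σ, C σ < k) →
      ∃ Y ⊆ X, Persistent d n k i Y ∧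
        ∀ ρ : List Bool, ρ.length = fmin X →
          ∃ S ⊆ T ρ, QuasiStrong Y S ∧ Prehom C Y S

/-- `eOf δ` : the least integer `e` with `2^{-e} < δ`. -/
noncomputable def eOf (δ : ℚ) : ℕ := sInf {e : ℕ | (2:ℚ) ^ (-(e:ℤ)) < δ}

/-- The Kučera–Gács coding bound `g(m,δ) = (m-1)e + m(m-1)/2`. -/
noncomputable def gKG (m : ℕ) (δ : ℚ) : ℕ := (m-1) * eOf δ + m*(m-1)/2

/-- `ḡ(x,k,i)`: iterated Kučera–Gács bound. -/
noncomputable def gbar (x k : ℕ) : ℕ → ℕ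
  | 0 => x + k + 1
  | i+1 => gKG (gbar x k i) (1/(k:ℚ))

/-- `h(ℓ,m,δ) = 2^{eℓ·2^{5m}}` where `e` is least with `2^{-e} < δ`. -/
noncomputable def hFun (l m : ℕ) (δ : ℚ) : ℕ := 2 ^ (eOf δ * l * 2 ^ (5*m))

/-- `h̄(x,n,k) = h(2^x, n, 1/k)·k^{2^x}`. -/
noncomputable def hbar (x n k : ℕ) : ℕ := hFun (2^x) n (1/(k:ℚ)) * k^(2^x)

/-- `expIter n x = exp^n(x)` where `exp(x) = 2^x`. -/
def expIter : ℕ → ℕ → ℕ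
  | 0, x => x
  | n+1, x => 2 ^ (expIter n x)
/-!
By induction on `i`. An `ω^d·(min X + 1)`-large set is `ω^{d+1}`-large: remove `min X` from the
first block and merge the rest of it into the second one. For `i + 1`, a witness `Y ⊆ X` is
replaced by `lowerMin (min X) Y`, whose minimum is `min X`; it stays `(ω^d·(min X + 1), k, i)`-
persistent because lowering the minimum to some `0 < a ≤ min Y` preserves `ω^d·n`-largeness (merge
the first blocks of a stack) and, by induction, persistence.

The heart of the matter is to get `PersClause k (lowerMin a Y) (lowerMin a Z)` from
`PersClause k Y Z`. A tree quasistrong for `lowerMin a Y` is stretched into a `Y`-quasistrong one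
by moving its branching from level `a` up to `min Y` and recording it in a single bit; the clause
for `Y` gives a subtree there, which is pulled back along the stretch and, if `min Z > min Y`,
pruned at the bottom.
-/

theorem fmin_eq_min' {X : Finset ℕ} (h : X.Nonempty) : fmin X = X.min' h := by
  rw [fmin, ← Finset.coe_min' h]; rfl

theorem fmax_eq_max' {X : Finset ℕ} (h : X.Nonempty) : fmax X = X.max' h := by
  rw [fmax, ← Finset.coe_max' h]; rfl

theorem fmin_mem {X : Finset ℕ} (h : X.Nonempty) : fmin X ∈ X := by
  rw [fmin_eq_min' h]; exact X.min'_mem h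

theorem fmax_mem {X : Finset ℕ} (h : X.Nonempty) : fmax X ∈ X := by
  rw [fmax_eq_max' h]; exact X.max'_mem h

theorem fmin_le {X : Finset ℕ} {x : ℕ} (hx : x ∈ X) : fmin X ≤ x := by
  rw [fmin_eq_min' ⟨x, hx⟩]; exact X.min'_le x hx

theorem le_fmax {X : Finset ℕ} {x : ℕ} (hx : x ∈ X) : x ≤ fmax X := by
  rw [fmax_eq_max' ⟨x, hx⟩]; exact X.le_max' x hx

theorem fmin_eq {X : Finset ℕ} {a : ℕ} (ha : a ∈ X) (h : ∀ x ∈ X, a ≤ x) : fmin X = a :=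
  le_antisymm (fmin_le ha) (h _ (fmin_mem ⟨a, ha⟩))

theorem fmax_eq {X : Finset ℕ} {a : ℕ} (ha : a ∈ X) (h : ∀ x ∈ X, x ≤ a) : fmax X = a :=
  le_antisymm (h _ (fmax_mem ⟨a, ha⟩)) (le_fmax ha)

theorem fmin_lt_of_mem_erase {X : Finset ℕ} {x : ℕ} (hx : x ∈ X.erase (fmin X)) : fmin X < x :=
  lt_of_le_of_ne (fmin_le (mem_of_mem_erase hx)) (ne_of_mem_erase hx).symm

theorem fmin_le_fmin {X Y : Finset ℕ} (hYX : Y ⊆ X) (hY : Y.Nonempty) : fmin X ≤ fmin Y :=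
  fmin_le (hYX (fmin_mem hY))

theorem erase_fmin_subset_erase_fmin {X Y : Finset ℕ} (hYX : Y ⊆ X) (hY : Y.Nonempty) :
    Y.erase (fmin Y) ⊆ X.erase (fmin X) := fun x hx => by
  refine mem_erase.2 ⟨fun hxX => ?_, hYX (mem_of_mem_erase hx)⟩
  have := fmin_lt_of_mem_erase hx
  have := fmin_le_fmin hYX hY
  omega

theorem fmax_insert_of_le {X : Finset ℕ} {a : ℕ} (hX : X.Nonempty) (ha : a ≤ fmax X) :
    fmax (insert a X) = fmax X :=
  fmax_eq (mem_insert_of_mem (fmax_mem hX)) fun x hx => by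
    rcases mem_insert.1 hx with rfl | hx
    exacts [ha, le_fmax hx]

theorem fmax_mem_erase_fmin {X : Finset ℕ} (hX : (X.erase (fmin X)).Nonempty) :
    fmax X ∈ X.erase (fmin X) := by
  obtain ⟨x, hx⟩ := hX
  have := le_fmax (mem_of_mem_erase hx)
  exact mem_erase.2
    ⟨((fmin_lt_of_mem_erase hx).trans_le this).ne', fmax_mem ⟨x, mem_of_mem_erase hx⟩⟩

theorem fmax_erase_fmin {X : Finset ℕ} (hX : (X.erase (fmin X)).Nonempty) :
    fmax (X.erase (fmin X)) = fmax X :=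
  fmax_eq (fmax_mem_erase_fmin hX) fun _ hx => le_fmax (mem_of_mem_erase hx)

def lowerMin (a : ℕ) (Y : Finset ℕ) : Finset ℕ := insert a (Y.erase (fmin Y))

theorem lowerMin_fmin {Y : Finset ℕ} (hY : Y.Nonempty) : lowerMin (fmin Y) Y = Y :=
  insert_erase (fmin_mem hY)

theorem fmin_lowerMin {Y : Finset ℕ} {a : ℕ} (ha : a ≤ fmin Y) : fmin (lowerMin a Y) = a := by
  refine fmin_eq (mem_insert_self _ _) fun x hx => ?_
  rcases mem_insert.1 hx with rfl | hx
  exacts [le_rfl, (ha.trans_lt (fmin_lt_of_mem_erase hx)).le]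

theorem lowerMin_subset_lowerMin {Y Z : Finset ℕ} {a : ℕ} (hZY : Z ⊆ Y) (hZ : Z.Nonempty) :
    lowerMin a Z ⊆ lowerMin a Y :=
  insert_subset_insert _ (erase_fmin_subset_erase_fmin hZY hZ)

theorem lowerMin_fmin_subset {X Y : Finset ℕ} (hYX : Y ⊆ X) (hY : Y.Nonempty) :
    lowerMin (fmin X) Y ⊆ X :=
  insert_subset (fmin_mem (hY.mono hYX)) ((erase_subset _ _).trans hYX)

theorem OmegaLarge.nonempty : ∀ {d : ℕ} {X : Finset ℕ}, OmegaLarge d X → X.Nonempty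
  | 0, _, h => h
  | _ + 1, _, h => h.1

def IsStack (d n : ℕ) (f : ℕ → Finset ℕ) : Prop :=
  (∀ m < n, OmegaLarge d (f m)) ∧ ∀ m, m + 1 < n → fmax (f m) < fmin (f (m + 1))

/-- Stated as a predicate on `d` because the stack manipulations below need it at level `d` while it
is proved by induction on `d`. -/
def AbsorbsLowerElements (d : ℕ) : Prop :=
  ∀ ⦃Z S : Finset ℕ⦄, OmegaLarge d Z → (∀ s ∈ S, 0 < s ∧ ∀ z ∈ Z, s < z) → OmegaLarge d (Z ∪ S)

theorem biUnion_range_succ (n : ℕ) (f : ℕ → Finset ℕ) :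
    (range (n + 1)).biUnion f = f 0 ∪ (range n).biUnion (fun j => f (j + 1)) := by
  ext x
  simp only [mem_biUnion, mem_range, mem_union]
  constructor
  · rintro ⟨_ | j, hj, hx⟩
    · exact .inl hx
    · exact .inr ⟨j, by omega, hx⟩
  · rintro (hx | ⟨j, hj, hx⟩)
    · exact ⟨0, by omega, hx⟩
    · exact ⟨j + 1, by omega, hx⟩

namespace IsStack

variable {d n : ℕ} {f : ℕ → Finset ℕ}

theorem nonempty (hf : IsStack d n f) {m : ℕ} (hm : m < n) : (f m).Nonempty :=
  (hf.1 m hm).nonempty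

theorem lt_of_lt (hf : IsStack d n f) {m m' : ℕ} (hmm' : m < m') (hm' : m' < n) {x y : ℕ}
    (hx : x ∈ f m) (hy : y ∈ f m') : x < y := by
  induction m' generalizing y with
  | zero => omega
  | succ p IH =>
    have hstep : ∀ w ∈ f p, w < y := fun w hw =>
      (le_fmax hw).trans_lt ((hf.2 p hm').trans_le (fmin_le hy))
    rcases (Nat.lt_succ_iff.1 hmm').eq_or_lt with rfl | hmp
    · exact hstep x hx
    · obtain ⟨w, hw⟩ := hf.nonempty (m := p) (by omega)
      exact (IH hmp (by omega) hw).trans (hstep w hw)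

theorem tail (hf : IsStack d (n + 1) f) : IsStack d n (fun j => f (j + 1)) :=
  ⟨fun m hm => hf.1 _ (by omega), fun m hm => hf.2 _ (by omega)⟩

theorem update_zero (hf : IsStack d n f) {E : Finset ℕ} (hE : OmegaLarge d E)
    (hlt : 1 < n → ∀ x ∈ E, ∀ y ∈ f 1, x < y) : IsStack d n (Function.update f 0 E) := by
  refine ⟨fun m hm => ?_, fun m hm => ?_⟩
  · rcases m with _ | m
    · simpa using hE
    · simpa using hf.1 _ hm
  · rcases m with _ | m
    · simpa using hlt hm _ (fmax_mem hE.nonempty) _ (fmin_mem (hf.nonempty hm))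
    · simpa using hf.2 _ hm

theorem fmin_biUnion (hf : IsStack d n f) (hn : 0 < n) :
    fmin ((range n).biUnion f) = fmin (f 0) := by
  refine fmin_eq (mem_biUnion.2 ⟨0, mem_range.2 hn, fmin_mem (hf.nonempty hn)⟩) fun x hx => ?_
  obtain ⟨m, hm, hx⟩ := mem_biUnion.1 hx
  rcases Nat.eq_zero_or_pos m with rfl | hm0
  · exact fmin_le hx
  · exact (hf.lt_of_lt hm0 (mem_range.1 hm) (fmin_mem (hf.nonempty hn)) hx).le

theorem exists_union_lower (hd : AbsorbsLowerElements d) (hf : IsStack d n f) (hn : 0 < n)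
    {E : Finset ℕ} (hE : ∀ e ∈ E, 0 < e ∧ ∀ x ∈ f 0, e < x) :
    ∃ g, IsStack d n g ∧ (range n).biUnion g = (range n).biUnion f ∪ E := by
  refine ⟨Function.update f 0 (f 0 ∪ E),
    hf.update_zero (hd (hf.1 0 hn) hE) fun h1 x hx y hy => ?_, ?_⟩
  · rcases mem_union.1 hx with hx | hx
    · exact hf.lt_of_lt zero_lt_one h1 hx hy
    · exact (hE x hx).2 _ (fmin_mem (hf.nonempty hn)) |>.trans
        (hf.lt_of_lt zero_lt_one h1 (fmin_mem (hf.nonempty hn)) hy)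
  · obtain ⟨n, rfl⟩ := Nat.exists_eq_succ_of_ne_zero hn.ne'
    simp only [biUnion_range_succ, Function.update_self]
    simp only [ne_eq, Nat.add_one_ne_zero, not_false_eq_true, Function.update_of_ne]
    ac_rfl

theorem exists_merge_first (hd : AbsorbsLowerElements d) {t : ℕ} (hn : 0 < n)
    (hf : IsStack d (n + t) f) (hpos : ∀ x ∈ (range (n + t)).biUnion f, 0 < x) :
    ∃ g, IsStack d n g ∧ (range n).biUnion g = (range (n + t)).biUnion f := by
  induction t generalizing f with
  | zero => exact ⟨f, hf, rfl⟩
  | succ t IH =>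
    have hf0 : ∀ e ∈ f 0, 0 < e ∧ ∀ x ∈ f (0 + 1), e < x := fun e he =>
      ⟨hpos e (mem_biUnion.2 ⟨0, by simp, he⟩),
        fun x hx => hf.lt_of_lt zero_lt_one (by omega) he hx⟩
    have hf' : IsStack d (n + t + 1) f := hf
    obtain ⟨g, hg, hgf⟩ := hf'.tail.exists_union_lower hd (by omega) hf0
    have hunion : (range (n + t)).biUnion g = (range (n + (t + 1))).biUnion f := by
      rw [hgf, ← add_assoc, biUnion_range_succ, union_comm]
    obtain ⟨g', hg', hg'g⟩ := IH hg (hunion ▸ hpos)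
    exact ⟨g', hg', hg'g.trans hunion⟩

end IsStack

theorem omegaLarge_succ_of_isStack {d w : ℕ} {g : ℕ → Finset ℕ} (hg : IsStack d w g)
    (hw : ∀ x ∈ (range w).biUnion g, w < x) :
    OmegaLarge (d + 1) (insert w ((range w).biUnion g)) := by
  have hmin : fmin (insert w ((range w).biUnion g)) = w :=
    fmin_eq (mem_insert_self _ _) fun x hx => by
      rcases mem_insert.1 hx with rfl | hx
      exacts [le_rfl, (hw x hx).le]
  refine ⟨insert_nonempty _ _, g, ?_⟩
  rw [hmin]
  exact ⟨hg.1, hg.2,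
    fun m hm => hw _ (mem_biUnion.2 ⟨m, mem_range.2 hm, fmin_mem (hg.nonempty hm)⟩), rfl⟩

theorem OmegaLarge.exists_isStack {d : ℕ} {Z : Finset ℕ} (h : OmegaLarge (d + 1) Z) :
    ∃ f, IsStack d (fmin Z) f ∧ (∀ x ∈ (range (fmin Z)).biUnion f, fmin Z < x) ∧
      Z = insert (fmin Z) ((range (fmin Z)).biUnion f) := by
  obtain ⟨-, f, hf, hstack, hmin, hZ⟩ := h
  refine ⟨f, ⟨hf, hstack⟩, fun x hx => ?_, hZ⟩
  obtain ⟨m, hm, hx⟩ := mem_biUnion.1 hx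
  exact (hmin m (mem_range.1 hm)).trans_le (fmin_le hx)

theorem omegaLarge_absorbsLowerElements : ∀ d, AbsorbsLowerElements d
  | 0 => fun _ _ hZ _ => hZ.mono subset_union_left
  | d + 1 => by
    intro Z S hZ hS
    rcases S.eq_empty_or_nonempty with rfl | hSne
    · simpa using hZ
    obtain ⟨f, hf, hfZ, hZeq⟩ := hZ.exists_isStack
    set m := fmin Z
    set w := fmin S
    have hwS : w ∈ S := fmin_mem hSne
    have hwm : w < m := (hS w hwS).2 m (hZeq ▸ mem_insert_self _ _)
    -- the new minimum `w` needs only `w` blocks: merge the first `m - w + 1` blocks of `Z`, then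
    -- put the old minimum and the rest of `S` into the merged block
    have hwm' : w + (m - w) = m := by omega
    obtain ⟨g, hg, hgf⟩ := IsStack.exists_merge_first (omegaLarge_absorbsLowerElements d)
      (hS w hwS).1 (hwm' ▸ hf) (by rw [hwm']; exact fun x hx => (Nat.zero_le m).trans_lt (hfZ x hx))
    rw [hwm'] at hgf
    have hg0 : ∀ x ∈ g 0, m < x := fun x hx =>
      hfZ x (hgf ▸ mem_biUnion.2 ⟨0, mem_range.2 (hS w hwS).1, hx⟩)
    have hE : ∀ e ∈ insert m (S.erase w), 0 < e ∧ ∀ x ∈ g 0, e < x := by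
      intro e he
      rcases mem_insert.1 he with rfl | he
      · exact ⟨(hS w hwS).1.trans hwm, hg0⟩
      · have hem := (hS e (mem_of_mem_erase he)).2 m (hZeq ▸ mem_insert_self _ _)
        exact ⟨(hS e (mem_of_mem_erase he)).1, fun x hx => hem.trans (hg0 x hx)⟩
    obtain ⟨g', hg', hg'g⟩ :=
      hg.exists_union_lower (omegaLarge_absorbsLowerElements d) (hS w hwS).1 hE
    have := omegaLarge_succ_of_isStack hg' (by
      rw [hg'g, hgf]
      intro x hx
      rcases mem_union.1 hx with hx | hx
      · exact hwm.trans (hfZ x hx)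
      · rcases mem_insert.1 hx with rfl | hx
        exacts [hwm, fmin_lt_of_mem_erase hx])
    convert this using 1
    rw [hg'g, hgf]
    conv_lhs => rw [hZeq]
    ext x
    by_cases hx : x = w <;> simp [hx, hwS]

theorem omegaLarge_lowerMin : ∀ {d : ℕ} {Z : Finset ℕ} {a : ℕ}, OmegaLarge d Z → 0 < a →
    a ≤ fmin Z → OmegaLarge d (lowerMin a Z)
  | 0, _, _, _, _, _ => insert_nonempty _ _
  | d + 1, Z, a, hZ, ha, haZ => by
    rcases haZ.eq_or_lt with rfl | haZ
    · rwa [lowerMin_fmin hZ.nonempty]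
    obtain ⟨f, hf, hfZ, hZeq⟩ := hZ.exists_isStack
    have hlow : lowerMin a Z = insert a ((range (fmin Z)).biUnion f) := by
      rw [lowerMin, hZeq, fmin_eq (mem_insert_self _ _) fun x hx => ?_]
      · rw [erase_insert fun h => (hfZ _ h).false]
      · rcases mem_insert.1 hx with rfl | hx
        exacts [le_rfl, (hfZ x hx).le]
    have haZ' : a + (fmin Z - a) = fmin Z := by omega
    obtain ⟨g, hg, hgf⟩ := IsStack.exists_merge_first (omegaLarge_absorbsLowerElements d) ha
      (haZ' ▸ hf) (by rw [haZ']; exact fun x hx => (Nat.zero_le _).trans_lt (hfZ x hx))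
    rw [haZ'] at hgf
    rw [hlow, ← hgf]
    exact omegaLarge_succ_of_isStack hg fun x hx => haZ.trans (hfZ x (hgf ▸ hx))

theorem omegaMulLarge_lowerMin {d n : ℕ} {Y : Finset ℕ} {a : ℕ} (h : OmegaMulLarge d n Y)
    (hn : 0 < n) (ha : 0 < a) (haY : a ≤ fmin Y) : OmegaMulLarge d n (lowerMin a Y) := by
  obtain ⟨B, hB, hstack, rfl⟩ := h
  have hBs : IsStack d n B := ⟨hB, hstack⟩
  have hmin := hBs.fmin_biUnion hn
  rw [hmin] at haY
  have hB0 := fmin_mem (hBs.nonempty hn)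
  have hstk := hBs.update_zero (omegaLarge_lowerMin (hB 0 hn) ha haY) fun h1 x hx y hy => by
    have hy0 := hBs.lt_of_lt zero_lt_one h1 hB0 hy
    rcases mem_insert.1 hx with rfl | hx
    exacts [haY.trans_lt hy0, hBs.lt_of_lt zero_lt_one h1 (mem_of_mem_erase hx) hy]
  refine ⟨_, hstk.1, hstk.2, ?_⟩
  obtain ⟨n, rfl⟩ := Nat.exists_eq_succ_of_ne_zero hn.ne'
  have hR : fmin (B 0) ∉ (range n).biUnion fun j => B (j + 1) := fun h => by
    obtain ⟨j, hj, h⟩ := mem_biUnion.1 h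
    exact (hBs.lt_of_lt (Nat.succ_pos j) (by simpa using hj) hB0 h).false
  rw [lowerMin, hmin]
  simp only [biUnion_range_succ, Function.update_self, ne_eq, Nat.add_one_ne_zero,
    not_false_eq_true, Function.update_of_ne, erase_union_distrib, erase_eq_of_notMem hR]
  rw [lowerMin, insert_union]

theorem omegaLarge_succ_of_omegaMulLarge {d : ℕ} {X : Finset ℕ} (hX : 0 < fmin X)
    (h : OmegaMulLarge d (fmin X + 1) X) : OmegaLarge (d + 1) X := by
  obtain ⟨B, hB, hstack, hXB⟩ := h
  have hBs : IsStack d (fmin X + 1) B := ⟨hB, hstack⟩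
  have hmin : fmin (B 0) = fmin X := by rw [← hBs.fmin_biUnion (Nat.succ_pos _), ← hXB]
  have hB0 : fmin X ∈ B 0 := hmin ▸ fmin_mem (hBs.nonempty (Nat.succ_pos _))
  have hgt : ∀ x ∈ (range (fmin X)).biUnion fun j => B (j + 1), fmin X < x := fun x hx => by
    obtain ⟨j, hj, hx⟩ := mem_biUnion.1 hx
    exact hBs.lt_of_lt (Nat.succ_pos j) (by simpa using hj) hB0 hx
  obtain ⟨g, hg, hgB⟩ := hBs.tail.exists_union_lower (omegaLarge_absorbsLowerElements d) hX
    (E := (B 0).erase (fmin X)) fun e he =>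
      ⟨hX.trans (hmin ▸ fmin_lt_of_mem_erase (hmin ▸ he)), fun x hx =>
        hBs.lt_of_lt zero_lt_one (by omega) (mem_of_mem_erase he) hx⟩
  have hX' : X = insert (fmin X) ((range (fmin X)).biUnion g) := by
    rw [hgB, union_comm, ← insert_union, insert_erase hB0, ← biUnion_range_succ, ← hXB]
  rw [hX']
  refine omegaLarge_succ_of_isStack hg fun x hx => ?_
  rw [hgB] at hx
  rcases mem_union.1 hx with hx | hx
  exacts [hgt x hx, hmin ▸ fmin_lt_of_mem_erase (hmin ▸ hx)]

theorem omegaLarge_singleton_zero : ∀ d, OmegaLarge d {0}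
  | 0 => singleton_nonempty 0
  | d + 1 => by
    simpa using omegaLarge_succ_of_isStack (d := d) (w := 0) (g := fun _ => ∅) ⟨by simp, by simp⟩
      (by simp)

theorem OmegaLarge.eq_singleton_zero {d : ℕ} {X : Finset ℕ} (hd : 1 ≤ d) (h : OmegaLarge d X)
    (hX : fmin X = 0) : X = {0} := by
  obtain ⟨e, rfl⟩ := Nat.exists_eq_add_of_le' hd
  obtain ⟨f, -, -, hXf⟩ := h.exists_isStack
  rw [hXf, hX]
  rfl

theorem omegaMulLarge_one_iff {d : ℕ} {X : Finset ℕ} : OmegaMulLarge d 1 X ↔ OmegaLarge d X := by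
  refine ⟨fun ⟨f, hf, _, hX⟩ => ?_, fun h => ⟨fun _ => X, fun _ _ => h, by simp, by simp⟩⟩
  rw [hX]
  simpa using hf 0 one_pos

theorem omegaMulLarge_succ_of_fmin {d : ℕ} {X : Finset ℕ} (hd : 1 ≤ d)
    (h : OmegaMulLarge d (fmin X + 1) X) : OmegaMulLarge (d + 1) 1 X := by
  rw [omegaMulLarge_one_iff]
  rcases Nat.eq_zero_or_pos (fmin X) with hX | hX
  · rw [hX, omegaMulLarge_one_iff] at h
    rw [h.eq_singleton_zero hd hX]
    exact omegaLarge_singleton_zero _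
  · exact omegaLarge_succ_of_omegaMulLarge hX h

section Trees

open List

variable {T S : Finset (List Bool)} {V W : Finset ℕ} {σ τ : List Bool} {a x z : ℕ}

theorem mem_level : σ ∈ level T x ↔ σ ∈ T ∧ σ.length = x := mem_filter

theorem level_mono {R : Finset (List Bool)} (h : R ⊆ S) : level R x ⊆ level S x :=
  filter_subset_filter _ h

theorem IsTree.take_mem_level (hT : IsTree T) (hσ : σ ∈ level T z) (hxz : x ≤ z) :
    σ.take x ∈ level T x :=
  mem_level.2 ⟨hT σ (mem_level.1 hσ).1 _ (take_prefix x σ), by simp [(mem_level.1 hσ).2, hxz]⟩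

def prefixClosure (L : Finset (List Bool)) : Finset (List Bool) :=
  L.biUnion fun t => t.inits.toFinset

theorem mem_prefixClosure {L : Finset (List Bool)} : σ ∈ prefixClosure L ↔ ∃ t ∈ L, σ <+: t := by
  simp [prefixClosure]

theorem isTree_prefixClosure (L : Finset (List Bool)) : IsTree (prefixClosure L) :=
  fun _ hσ _ hτσ =>
    let ⟨t, ht, hσt⟩ := mem_prefixClosure.1 hσ
    mem_prefixClosure.2 ⟨t, ht, hτσ.trans hσt⟩

theorem level_prefixClosure {L : Finset (List Bool)} {N : ℕ} (hL : ∀ t ∈ L, t.length = N)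
    (hx : x ≤ N) : level (prefixClosure L) x = L.image (take x) := by
  ext σ
  simp only [mem_level, mem_prefixClosure, mem_image]
  constructor
  · rintro ⟨⟨t, ht, hσt⟩, rfl⟩
    exact ⟨t, ht, (prefix_iff_eq_take.1 hσt).symm⟩
  · rintro ⟨t, ht, rfl⟩
    exact ⟨⟨t, ht, take_prefix _ _⟩, by simp [hL t ht, hx]⟩

theorem IsLeaf.mem_of_prefixClosure {L : Finset (List Bool)} (h : IsLeaf (prefixClosure L) σ) :
    σ ∈ L := by
  obtain ⟨t, ht, hσt⟩ := mem_prefixClosure.1 h.1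
  rwa [← h.2 t (mem_prefixClosure.2 ⟨t, ht, prefix_rfl⟩) hσt]

theorem exists_isLeaf (hσ : σ ∈ S) : ∃ l, IsLeaf S l ∧ σ <+: l := by
  obtain ⟨l, hl, hmax⟩ :=
    (S.filter (σ <+: ·)).exists_max_image length ⟨σ, mem_filter.2 ⟨hσ, prefix_rfl⟩⟩
  refine ⟨l, ⟨(mem_filter.1 hl).1, fun τ hτ hlτ => ?_⟩, (mem_filter.1 hl).2⟩
  exact (hlτ.eq_of_length (le_antisymm hlτ.length_le
    (hmax τ (mem_filter.2 ⟨hτ, (mem_filter.1 hl).2.trans hlτ⟩)))).symm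

theorem exists_consec (hx : x ∈ V) (hlt : x < fmax V) : ∃ z, Consec V x z := by
  have hne : (V.filter (x < ·)).Nonempty := ⟨fmax V, mem_filter.2 ⟨fmax_mem ⟨x, hx⟩, hlt⟩⟩
  have hz := mem_filter.1 (fmin_mem hne)
  refine ⟨_, hx, hz.1, hz.2, fun y hy => ?_⟩
  by_cases hxy : x < y
  · exact .inr (fmin_le (mem_filter.2 ⟨hy, hxy⟩))
  · exact .inl (not_lt.1 hxy)

theorem QuasiStrong.exists_prefix_fmax (hT : QuasiStrong V T) {x : ℕ} (hx : x ∈ V)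
    {σ : List Bool} (hσ : σ ∈ level T x) : ∃ τ ∈ level T (fmax V), σ <+: τ := by
  by_cases hxV : fmax V ≤ x
  · exact ⟨σ, le_antisymm (le_fmax hx) hxV ▸ hσ, prefix_rfl⟩
  obtain ⟨z, hz⟩ := exists_consec hx (not_le.1 hxV)
  obtain ⟨ρ, hρ⟩ := card_pos.1 (by rw [hT.2.2 x z hz σ hσ]; omega)
  have : fmax V - z < fmax V - x := by have := le_fmax hz.2.1; have := hz.2.2.1; omega
  obtain ⟨τ, hτ, hρτ⟩ := hT.exists_prefix_fmax hz.2.1 (mem_filter.1 hρ).1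
  exact ⟨τ, hτ, (mem_filter.1 hρ).2.trans hρτ⟩
termination_by fmax V - x

theorem QuasiStrong.level_eq_image_take (hT : QuasiStrong V T) (hx : x ∈ V) :
    level T x = (level T (fmax V)).image (take x) := by
  ext σ
  rw [mem_image]
  constructor
  · intro hσ
    obtain ⟨τ, hτ, hστ⟩ := hT.exists_prefix_fmax hx hσ
    exact ⟨τ, hτ, by rw [prefix_iff_eq_take.1 hστ, (mem_level.1 hσ).2]⟩
  · rintro ⟨τ, hτ, rfl⟩
    exact hT.1.take_mem_level hτ (le_fmax hx)

theorem consec_insert_iff (ha : ∀ w ∈ W, a < w) (hW : W.Nonempty) :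
    Consec (insert a W) x z ↔ (x = a ∧ z = fmin W) ∨ Consec W x z := by
  have hmin := fmin_mem hW
  constructor
  · rintro ⟨hx, hz, hxz, hsep⟩
    have hzW : z ∈ W := (mem_insert.1 hz).resolve_left fun h => by
      rcases mem_insert.1 hx with rfl | hx
      exacts [by omega, by have := ha x hx; omega]
    rcases mem_insert.1 hx with rfl | hx
    · refine .inl ⟨rfl, le_antisymm ?_ (fmin_le hzW)⟩
      exact (hsep _ (mem_insert_of_mem hmin)).resolve_left (not_le.2 (ha _ hmin))
    · exact .inr ⟨hx, hzW, hxz, fun y hy => hsep y (mem_insert_of_mem hy)⟩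
  · rintro (⟨rfl, rfl⟩ | ⟨hx, hz, hxz, hsep⟩)
    · refine ⟨mem_insert_self _ _, mem_insert_of_mem hmin, ha _ hmin, fun y hy => ?_⟩
      rcases mem_insert.1 hy with rfl | hy
      exacts [.inl le_rfl, .inr (fmin_le hy)]
    · refine ⟨mem_insert_of_mem hx, mem_insert_of_mem hz, hxz, fun y hy => ?_⟩
      rcases mem_insert.1 hy with rfl | hy
      exacts [.inl (ha x hx).le, hsep y hy]

theorem quasiStrong_insert_iff (ha : ∀ w ∈ W, a < w) (hW : W.Nonempty) :
    QuasiStrong (insert a W) T ↔ QuasiStrong W T ∧ (level T a).Nonempty ∧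
      ∀ σ ∈ level T a, ((level T (fmin W)).filter (σ <+: ·)).card = 2 := by
  simp only [QuasiStrong, forall_mem_insert, consec_insert_iff ha hW]
  constructor
  · rintro ⟨hT, ⟨hlev, hlevW⟩, hbr⟩
    exact ⟨⟨hT, hlevW, fun x z hxz => hbr x z (.inr hxz)⟩, hlev, hbr a _ (.inl ⟨rfl, rfl⟩)⟩
  · rintro ⟨⟨hT, hlevW, hbrW⟩, hlev, hbr⟩
    refine ⟨hT, ⟨hlev, hlevW⟩, fun x z => ?_⟩
    rintro (⟨rfl, rfl⟩ | hxz)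
    exacts [hbr, hbrW x z hxz]

theorem quasiStrong_singleton_iff : QuasiStrong {a} T ↔ IsTree T ∧ (level T a).Nonempty := by
  simp only [QuasiStrong, Finset.mem_singleton, forall_eq]
  refine ⟨fun h => ⟨h.1, h.2.1⟩, fun h => ⟨h.1, h.2, fun x z ⟨hx, hz, hxz, _⟩ => ?_⟩⟩
  rw [Finset.mem_singleton] at hx hz
  omega

theorem card_filter_prefix_image {T' : Finset (List Bool)} {φ : List Bool → List Bool}
    {ν : List Bool} (himage : level T' z = (level T z).image φ) (hinj : Set.InjOn φ (level T z))
    (hpre : ∀ τ ∈ level T z, ν <+: φ τ ↔ σ <+: τ) :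
    ((level T' z).filter (ν <+: ·)).card = ((level T z).filter (σ <+: ·)).card := by
  rw [himage, filter_image, card_image_of_injOn (hinj.mono (coe_subset.2 (filter_subset _ _))),
    filter_congr hpre]

theorem prefix_iff_of_injOn {φ : List Bool → List Bool} (hT : IsTree T) (hσ : σ ∈ level T x)
    (hτ : τ ∈ level T z) (hxz : x ≤ z) (hinj : Set.InjOn φ (level T x))
    (hlen : (φ σ).length = x) (htake : φ (τ.take x) = (φ τ).take x) :
    φ σ <+: φ τ ↔ σ <+: τ := by
  rw [prefix_iff_eq_take (l₁ := φ σ), prefix_iff_eq_take (l₁ := σ), hlen, (mem_level.1 hσ).2,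
    ← htake]
  exact hinj.eq_iff hσ (hT.take_mem_level hτ hxz)

theorem quasiStrong_iff_of_level_eq_image {T' : Finset (List Bool)} {φ : List Bool → List Bool}
    (hT : IsTree T) (hT' : IsTree T') (hlevel : ∀ x ∈ V, level T' x = (level T x).image φ)
    (hinj : ∀ x ∈ V, Set.InjOn φ (level T x))
    (htake : ∀ x ∈ V, ∀ z ∈ V, x ≤ z → ∀ τ ∈ level T z, φ (τ.take x) = (φ τ).take x) :
    QuasiStrong V T' ↔ QuasiStrong V T := by
  have hlen : ∀ x ∈ V, ∀ σ ∈ level T x, (φ σ).length = x := fun x hx σ hσ =>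
    (mem_level.1 (hlevel x hx ▸ mem_image_of_mem φ hσ)).2
  have hbr : ∀ x z, Consec V x z → ∀ σ ∈ level T x,
      ((level T' z).filter (φ σ <+: ·)).card = ((level T z).filter (σ <+: ·)).card :=
    fun x z hxz σ hσ => card_filter_prefix_image (hlevel z hxz.2.1) (hinj z hxz.2.1) fun τ hτ =>
      prefix_iff_of_injOn hT hσ hτ hxz.2.2.1.le (hinj x hxz.1) (hlen x hxz.1 σ hσ)
        (htake x hxz.1 z hxz.2.1 hxz.2.2.1.le τ hτ)
  simp only [QuasiStrong, hT, hT', true_and]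
  refine and_congr (forall₂_congr fun x hx => by rw [hlevel x hx, image_nonempty])
    (forall₃_congr fun x z hxz => ?_)
  rw [hlevel x hxz.1, forall_mem_image]
  exact forall₂_congr fun σ hσ => by rw [hbr x z hxz σ hσ]

section Tsub

variable {σ₀ : List Bool}

theorem mem_tsub : τ ∈ Tsub S σ₀ ↔ τ ∈ S ∧ Compat τ σ₀ := mem_filter

theorem prefix_of_mem_tsub (hτ : τ ∈ Tsub S σ₀) (hlen : σ₀.length ≤ τ.length) : σ₀ <+: τ :=
  (mem_tsub.1 hτ).2.elim (fun h => (h.eq_of_length (le_antisymm h.length_le hlen)) ▸ prefix_rfl) id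

theorem isTree_tsub (hS : IsTree S) : IsTree (Tsub S σ₀) := fun σ hσ τ hτσ => by
  refine mem_tsub.2 ⟨hS σ (mem_tsub.1 hσ).1 τ hτσ, ?_⟩
  rcases (mem_tsub.1 hσ).2 with h | h
  · exact .inl (hτσ.trans h)
  · exact prefix_or_prefix_of_prefix hτσ h

theorem filter_level_tsub (hσ : σ₀ <+: σ) :
    (level (Tsub S σ₀) z).filter (σ <+: ·) = (level S z).filter (σ <+: ·) := by
  ext τ
  simp only [level, Tsub, Finset.mem_filter]
  exact ⟨fun ⟨⟨⟨h, _⟩, h'⟩, h''⟩ => ⟨⟨h, h'⟩, h''⟩,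
    fun ⟨⟨h, h'⟩, h''⟩ => ⟨⟨⟨h, .inr (hσ.trans h'')⟩, h'⟩, h''⟩⟩

theorem IsLeaf.of_tsub (hσ₀ : σ₀ ∈ S) (h : IsLeaf (Tsub S σ₀) σ) : IsLeaf S σ := by
  have hσ₀σ : σ₀ <+: σ := (mem_tsub.1 h.1).2.elim
    (fun hσσ₀ => h.2 σ₀ (mem_tsub.2 ⟨hσ₀, .inl prefix_rfl⟩) hσσ₀ ▸ prefix_rfl) id
  exact ⟨(mem_tsub.1 h.1).1, fun τ hτ hστ => h.2 τ (mem_tsub.2 ⟨hτ, .inr (hσ₀σ.trans hστ)⟩) hστ⟩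

end Tsub

theorem QuasiStrong.tsub (hS : QuasiStrong V S) {σ₀ : List Bool} (hσ₀ : σ₀ ∈ level S (fmin V))
    (hV : V.Nonempty) : QuasiStrong V (Tsub S σ₀) := by
  have hR := isTree_tsub (σ₀ := σ₀) hS.1
  refine ⟨hR, fun x hx => ?_, fun x z hxz σ hσ => ?_⟩
  · obtain ⟨τ, hτ, hσ₀τ⟩ := hS.exists_prefix_fmax (fmin_mem hV) hσ₀
    exact ⟨τ.take x, hR.take_mem_level (mem_level.2 ⟨mem_tsub.2 ⟨(mem_level.1 hτ).1, .inr hσ₀τ⟩,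
      (mem_level.1 hτ).2⟩) (le_fmax hx)⟩
  · have hσ₀σ := prefix_of_mem_tsub (mem_level.1 hσ).1
      ((mem_level.1 hσ).2 ▸ (mem_level.1 hσ₀).2 ▸ fmin_le hxz.1)
    rw [filter_level_tsub hσ₀σ]
    exact hS.2.2 x z hxz σ (level_mono (filter_subset _ _) hσ)

/-- Pruning `S` to the nodes compatible with one node at level `min V` leaves a tree with a single
node at each level up to `min V`, so the bottom level can be moved down to any `a < min V`. -/
theorem QuasiStrong.exists_subtree_lowerMin (hS : QuasiStrong V S) (hV : V.Nonempty)
    (ha : a < fmin V) : ∃ R ⊆ S, QuasiStrong (lowerMin a V) R ∧ ∀ σ, IsLeaf R σ → IsLeaf S σ := by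
  obtain ⟨σ₀, hσ₀⟩ := hS.2.1 _ (fmin_mem hV)
  obtain ⟨hσ₀S, hσ₀len⟩ := mem_level.1 hσ₀
  refine ⟨Tsub S σ₀, filter_subset _ _, ?_, fun σ hσ => hσ.of_tsub hσ₀S⟩
  have hR := hS.tsub hσ₀ hV
  have hρ : σ₀.take a ∈ level (Tsub S σ₀) a :=
    hR.1.take_mem_level (mem_level.2 ⟨mem_tsub.2 ⟨hσ₀S, .inl prefix_rfl⟩, hσ₀len⟩) ha.le
  rcases (V.erase (fmin V)).eq_empty_or_nonempty with hW | hW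
  · rw [lowerMin, hW]
    exact quasiStrong_singleton_iff.2 ⟨hR.1, _, hρ⟩
  have hlt : ∀ w ∈ V.erase (fmin V), fmin V < w := fun w hw => fmin_lt_of_mem_erase hw
  have hVW : insert (fmin V) (V.erase (fmin V)) = V := insert_erase (fmin_mem hV)
  obtain ⟨-, -, hbr⟩ := (quasiStrong_insert_iff hlt hW).1 (by rw [hVW]; exact hS)
  refine (quasiStrong_insert_iff (fun w hw => ha.trans (hlt w hw)) hW).2
    ⟨((quasiStrong_insert_iff hlt hW).1 (by rw [hVW]; exact hR)).1, ⟨_, hρ⟩, fun ρ hρ' => ?_⟩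
  -- the only node at level `a` is the prefix of `σ₀`, and every node above `σ₀` extends it
  have hρσ₀ : ρ <+: σ₀ := (mem_tsub.1 (mem_level.1 hρ').1).2.resolve_right fun h => by
    have := h.length_le
    have := (mem_level.1 hρ').2
    omega
  have hz := mem_of_mem_erase (fmin_mem hW)
  rw [filter_congr fun τ hτ => ⟨fun _ => prefix_of_mem_tsub (mem_level.1 hτ).1
    ((mem_level.1 hτ).2 ▸ hσ₀len ▸ fmin_le hz), hρσ₀.trans⟩, filter_level_tsub prefix_rfl]
  exact hbr σ₀ hσ₀

end Trees

theorem persClause_singleton {k a : ℕ} {V : Finset ℕ} (hV : V.Nonempty) (ha : a ≤ fmax V) :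
    PersClause k V {a} := by
  intro T hT C hC
  obtain ⟨τ, hτ⟩ := hT.2.1 _ (fmax_mem hV)
  have hρ : τ.take a ∈ level (prefixClosure {τ.take a}) a :=
    mem_level.2 ⟨mem_prefixClosure.2 ⟨_, mem_singleton_self _, List.prefix_rfl⟩,
      by simp [(mem_level.1 hτ).2, ha]⟩
  refine ⟨C τ, hC τ hτ, prefixClosure {τ.take a}, fun σ hσ => ?_,
    quasiStrong_singleton_iff.2 ⟨isTree_prefixClosure _, _, hρ⟩, fun σ hσ => ⟨τ, hτ, ?_, rfl⟩⟩
  · obtain ⟨_, h, hσ⟩ := mem_prefixClosure.1 hσ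
    exact hT.1 τ (mem_level.1 hτ).1 σ (hσ.trans (mem_singleton.1 h ▸ List.take_prefix _ _))
  · rw [mem_singleton.1 hσ.mem_of_prefixClosure]
    exact List.take_prefix _ _

section Stretch

open List

variable {a y₀ y₁ : ℕ} {b : List Bool → Bool} {σ τ ρ : List Bool}

/-- The bits of `σ` between `a` and `y₁` are erased, except the one at `y₀`, through which `b`
records the node at level `y₁` that `σ` passes. -/
def stretch (a y₀ y₁ : ℕ) (b : List Bool → Bool) (σ : List Bool) : List Bool :=
  (σ.take a ++ replicate (y₀ - a) false ++ b (σ.take y₁) :: replicate (y₁ - y₀ - 1) false) ++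
    σ.drop y₁

theorem length_stretch (ha : a ≤ y₀) (hy : y₀ < y₁) (hσ : y₁ ≤ σ.length) :
    (stretch a y₀ y₁ b σ).length = σ.length := by
  simp only [stretch, length_append, length_take, length_replicate, length_cons, length_drop]
  omega

theorem stretch_take (ha : a ≤ y₀) (hy : y₀ < y₁) (hσ : y₁ ≤ σ.length) {l : ℕ} (hl : y₁ ≤ l) :
    stretch a y₀ y₁ b (σ.take l) = (stretch a y₀ y₁ b σ).take l := by
  have hstem : (σ.take a ++ replicate (y₀ - a) false ++
      b (σ.take y₁) :: replicate (y₁ - y₀ - 1) false).length = y₁ := by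
    simp only [length_append, length_take, length_replicate, length_cons]
    omega
  rw [stretch, stretch, take_take, take_take, min_eq_left (show a ≤ l by omega), min_eq_left hl,
    drop_take, take_append, hstem, take_of_length_le (hstem.le.trans hl)]

theorem take_stretch_eq_append_replicate (ha : a ≤ y₀) (hy : y₀ < y₁) (hσ : y₁ ≤ σ.length) :
    (stretch a y₀ y₁ b σ).take y₀ = σ.take a ++ replicate (y₀ - a) false := by
  have hlen : (σ.take a ++ replicate (y₀ - a) false).length = y₀ := by simp; omega
  rw [stretch, append_assoc, take_append, take_of_length_le hlen.le, hlen, Nat.sub_self, take_zero,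
    append_nil]

theorem append_replicate_prefix_stretch_iff (ha : a ≤ y₀) (hy : y₀ < y₁) (hτ : y₁ ≤ τ.length)
    (hρ : ρ.length = a) : ρ ++ replicate (y₀ - a) false <+: stretch a y₀ y₁ b τ ↔ ρ <+: τ := by
  rw [prefix_iff_eq_take, prefix_iff_eq_take, hρ]
  simp [show (ρ ++ replicate (y₀ - a) false).length = y₀ by simp; omega,
    take_stretch_eq_append_replicate ha hy hτ]

theorem stretch_inj (ha : a ≤ y₀) (hy : y₀ < y₁) (hσ : y₁ ≤ σ.length)
    (hlen : σ.length = τ.length) (h : stretch a y₀ y₁ b σ = stretch a y₀ y₁ b τ) :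
    σ.take a = τ.take a ∧ b (σ.take y₁) = b (τ.take y₁) ∧ σ.drop y₁ = τ.drop y₁ := by
  obtain ⟨hstem, hdrop⟩ := append_inj h (by simp; omega)
  obtain ⟨hpre, hbit⟩ := append_inj hstem (by simp; omega)
  obtain ⟨htake, -⟩ := append_inj hpre (by simp; omega)
  exact ⟨htake, (cons_eq_cons.1 hbit).1, hdrop⟩

theorem exists_bool_injOn_fibers {α β : Type*} [LinearOrder α] [DecidableEq β] (s : Finset α)
    (κ : α → β) (h : ∀ x ∈ s, (s.filter (κ · = κ x)).card ≤ 2) :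
    ∃ f : α → Bool, ∀ x ∈ s, ∀ y ∈ s, κ x = κ y → f x = f y → x = y := by
  classical
  refine ⟨fun x => decide (∃ w ∈ s, κ w = κ x ∧ w < x), ?_⟩
  have key : ∀ x ∈ s, ∀ y ∈ s, κ x = κ y → x < y →
      decide (∃ w ∈ s, κ w = κ x ∧ w < x) ≠ decide (∃ w ∈ s, κ w = κ y ∧ w < y) := by
    intro x hx y hy hxy hlt heq
    obtain ⟨w, hw, hwx, hwlt⟩ := of_decide_eq_true (heq.trans (decide_eq_true ⟨x, hx, hxy, hlt⟩))
    refine (h x hx).not_gt (two_lt_card.2 ⟨w, ?_, x, ?_, y, ?_, hwlt.ne, (hwlt.trans hlt).ne,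
      hlt.ne⟩) <;> simp [*]
  intro x hx y hy hxy hb
  by_contra hne
  rcases lt_or_gt_of_ne hne with hlt | hlt
  exacts [key x hx y hy hxy hlt hb, key y hy x hx hxy.symm hlt hb.symm]

def SeparatesSiblings (T : Finset (List Bool)) (a y₁ : ℕ) (b : List Bool → Bool) : Prop :=
  ∀ σ ∈ level T y₁, ∀ τ ∈ level T y₁, σ.take a = τ.take a → b σ = b τ → σ = τ

theorem exists_separatesSiblings {T : Finset (List Bool)} (hT : IsTree T) (hay : a ≤ y₁)
    (h : ∀ ρ ∈ level T a, ((level T y₁).filter (ρ <+: ·)).card = 2) :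
    ∃ b, SeparatesSiblings T a y₁ b := by
  refine exists_bool_injOn_fibers _ (take a) fun σ hσ =>
    (card_le_card fun τ hτ => ?_).trans (h _ (hT.take_mem_level hσ hay)).le
  rw [Finset.mem_filter] at hτ ⊢
  refine ⟨hτ.1, ?_⟩
  rw [← hτ.2]
  exact take_prefix _ _

theorem injOn_stretch {T : Finset (List Bool)} (hT : IsTree T) (hb : SeparatesSiblings T a y₁ b)
    (ha : a ≤ y₀) (hy : y₀ < y₁) {x : ℕ} (hx : y₁ ≤ x) :
    Set.InjOn (stretch a y₀ y₁ b) (level T x) := by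
  intro σ hσ τ hτ h
  have hσx := (mem_level.1 hσ).2
  obtain ⟨htake, hbit, hdrop⟩ :=
    stretch_inj ha hy (hσx ▸ hx) (hσx.trans (mem_level.1 hτ).2.symm) h
  have hay : a ≤ y₁ := by omega
  have hstem := hb _ (hT.take_mem_level hσ hx) _ (hT.take_mem_level hτ hx)
    (by rw [take_take, take_take, min_eq_left hay, htake]) hbit
  rw [← take_append_drop y₁ σ, ← take_append_drop y₁ τ, hstem, hdrop]

end Stretch

section StretchTree

open List

variable {T : Finset (List Bool)} {V : Finset ℕ} {a y₀ x : ℕ} {b : List Bool → Bool}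

/-- Its levels in `V` are copies of those of `T`, while the branching of `T` between the levels `a`
and `min V` is moved to the levels `y₀` and `min V`. -/
def stretchTree (T : Finset (List Bool)) (V : Finset ℕ) (a y₀ : ℕ) (b : List Bool → Bool) :
    Finset (List Bool) :=
  prefixClosure ((level T (fmax V)).image (stretch a y₀ (fmin V) b))

theorem length_stretch_of_mem_level (ha : a ≤ y₀) (hy : y₀ < fmin V) (hx : x ∈ V) {t : List Bool}
    (ht : t ∈ level T x) : (stretch a y₀ (fmin V) b t).length = x := by
  rw [length_stretch ha hy ((mem_level.1 ht).2 ▸ fmin_le hx), (mem_level.1 ht).2]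

theorem level_stretchTree (hT : QuasiStrong V T) (ha : a ≤ y₀) (hy : y₀ < fmin V) (hx : x ∈ V) :
    level (stretchTree T V a y₀ b) x = (level T x).image (stretch a y₀ (fmin V) b) := by
  have hM := fmax_mem ⟨x, hx⟩
  rw [stretchTree, level_prefixClosure (N := fmax V) (fun t ht => by
      obtain ⟨t, ht', rfl⟩ := mem_image.1 ht
      exact length_stretch_of_mem_level ha hy hM ht') (le_fmax hx),
    image_image, hT.level_eq_image_take hx, image_image]
  exact image_congr fun t ht =>
    (stretch_take ha hy ((mem_level.1 (mem_coe.1 ht)).2 ▸ fmin_le hM) (fmin_le hx)).symm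

theorem level_stretchTree_eq_image_append (hT : QuasiStrong (insert a V) T) (hV : V.Nonempty)
    (ha : a < y₀) (hy : y₀ < fmin V) :
    level (stretchTree T V a y₀ b) y₀ = (level T a).image (· ++ replicate (y₀ - a) false) := by
  have hM := fmax_mem hV
  have hyM : fmin V ≤ fmax V := fmin_le hM
  rw [stretchTree, level_prefixClosure (N := fmax V) (fun t ht => by
      obtain ⟨t, ht', rfl⟩ := mem_image.1 ht
      exact length_stretch_of_mem_level ha.le hy hM ht') (by omega),
    image_image, hT.level_eq_image_take (mem_insert_self a V), fmax_insert_of_le hV (by omega),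
    image_image]
  exact image_congr fun t ht =>
    take_stretch_eq_append_replicate ha.le hy ((mem_level.1 (mem_coe.1 ht)).2 ▸ hyM)

theorem quasiStrong_stretchTree (hT : QuasiStrong (insert a V) T) (hV : V.Nonempty)
    (ha : a < y₀) (hy : y₀ < fmin V) (hb : SeparatesSiblings T a (fmin V) b) :
    QuasiStrong (insert y₀ V) (stretchTree T V a y₀ b) := by
  have hV₀ : ∀ w ∈ V, fmin V ≤ w := fun w hw => fmin_le hw
  obtain ⟨hTV, hlev, hbr⟩ :=
    (quasiStrong_insert_iff (fun w hw => ha.trans (hy.trans_le (hV₀ w hw))) hV).1 hT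
  have hinj : ∀ x ∈ V, Set.InjOn (stretch a y₀ (fmin V) b) (level T x) := fun x hx =>
    injOn_stretch hT.1 hb ha.le hy (hV₀ x hx)
  refine (quasiStrong_insert_iff (fun w hw => hy.trans_le (hV₀ w hw)) hV).2
    ⟨(quasiStrong_iff_of_level_eq_image hT.1 (isTree_prefixClosure _)
      (fun x hx => level_stretchTree hTV ha.le hy hx) hinj fun x hx _ _ hxz _ hτ =>
        stretch_take ha.le hy ((mem_level.1 hτ).2 ▸ (hV₀ x hx).trans hxz) (hV₀ x hx)).2 hTV, ?_, ?_⟩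
  · rw [level_stretchTree_eq_image_append hT hV ha hy]
    exact hlev.image _
  · rw [level_stretchTree_eq_image_append hT hV ha hy, forall_mem_image]
    intro ρ hρ
    rw [card_filter_prefix_image (level_stretchTree hTV ha.le hy (fmin_mem hV))
      (hinj _ (fmin_mem hV)) fun τ hτ => append_replicate_prefix_stretch_iff ha.le hy
        (mem_level.1 hτ).2.ge (mem_level.1 hρ).2]
    exact hbr ρ hρ

end StretchTree

section Pullback

open List

variable {T S : Finset (List Bool)} {Z W : Finset ℕ} {a y₀ y₁ l N : ℕ} {b : List Bool → Bool}

def pullbackTree (T : Finset (List Bool)) (φ : List Bool → List Bool) (N : ℕ)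
    (S : Finset (List Bool)) : Finset (List Bool) :=
  prefixClosure ((level T N).filter (φ · ∈ S))

theorem pullbackTree_subset (hT : IsTree T) {φ : List Bool → List Bool} :
    pullbackTree T φ N S ⊆ T := fun σ hσ => by
  obtain ⟨t, ht, hσt⟩ := mem_prefixClosure.1 hσ
  exact hT t (mem_level.1 (mem_filter.1 ht).1).1 σ hσt

theorem image_filter_level_stretch (ha : a ≤ y₀) (hy : y₀ < y₁) (hN : y₁ ≤ N)
    (hSN : level S N ⊆ (level T N).image (stretch a y₀ y₁ b)) :
    ((level T N).filter (stretch a y₀ y₁ b · ∈ S)).image (stretch a y₀ y₁ b) = level S N := by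
  ext π
  simp only [mem_image, Finset.mem_filter]
  constructor
  · rintro ⟨t, ⟨ht, htS⟩, rfl⟩
    have := (mem_level.1 ht).2
    exact mem_level.2 ⟨htS, by rw [length_stretch ha hy (by omega), this]⟩
  · intro hπ
    obtain ⟨t, ht, rfl⟩ := mem_image.1 (hSN hπ)
    exact ⟨t, ⟨ht, (mem_level.1 hπ).1⟩, rfl⟩

theorem level_pullbackTree (ha : a ≤ y₀) (hy : y₀ < y₁) (hS : QuasiStrong Z S)
    (hSN : level S (fmax Z) ⊆ (level T (fmax Z)).image (stretch a y₀ y₁ b)) (hl : l ∈ Z)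
    (hyl : y₁ ≤ l) :
    level S l = (level (pullbackTree T (stretch a y₀ y₁ b) (fmax Z) S) l).image
      (stretch a y₀ y₁ b) := by
  have hlN := le_fmax hl
  rw [pullbackTree,
    level_prefixClosure (N := fmax Z) (fun t ht => (mem_level.1 (mem_filter.1 ht).1).2) hlN,
    image_image, hS.level_eq_image_take hl,
    ← image_filter_level_stretch ha hy (hyl.trans hlN) hSN, image_image]
  exact image_congr fun t ht => (stretch_take ha hy
    ((mem_level.1 (mem_filter.1 (mem_coe.1 ht)).1).2 ▸ hyl.trans hlN) hyl).symm

theorem quasiStrong_pullbackTree (hT : IsTree T) (hb : SeparatesSiblings T a y₁ b) (ha : a ≤ y₀)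
    (hy : y₀ < y₁) (hS : QuasiStrong Z S)
    (hSN : level S (fmax Z) ⊆ (level T (fmax Z)).image (stretch a y₀ y₁ b)) (hWZ : W ⊆ Z)
    (hWy : ∀ x ∈ W, y₁ ≤ x) (hSW : QuasiStrong W S) :
    QuasiStrong W (pullbackTree T (stretch a y₀ y₁ b) (fmax Z) S) :=
  (quasiStrong_iff_of_level_eq_image (isTree_prefixClosure _) hSW.1
    (fun x hx => level_pullbackTree ha hy hS hSN (hWZ hx) (hWy x hx))
    (fun x hx => (injOn_stretch hT hb ha hy (hWy x hx)).mono
      (coe_subset.2 (level_mono (pullbackTree_subset hT))))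
    fun x hx _ _ hxz _ hτ => stretch_take ha hy ((mem_level.1 hτ).2 ▸ (hWy x hx).trans hxz)
      (hWy x hx)).1 hSW

theorem quasiStrong_pullbackTree_insert (hT : IsTree T) (hb : SeparatesSiblings T a y₁ b)
    (ha : a ≤ y₀) (hy : y₀ < y₁) (hS : QuasiStrong (insert y₀ W) S)
    (hSN : level S (fmax (insert y₀ W)) ⊆
      (level T (fmax (insert y₀ W))).image (stretch a y₀ y₁ b))
    (hW : W.Nonempty) (hWy : ∀ x ∈ W, y₁ ≤ x) :
    QuasiStrong (insert a W) (pullbackTree T (stretch a y₀ y₁ b) (fmax (insert y₀ W)) S) := by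
  set N := fmax (insert y₀ W)
  have hyW : ∀ w ∈ W, y₀ < w := fun w hw => hy.trans_le (hWy w hw)
  have hN : y₁ ≤ N := (hWy _ (fmax_mem hW)).trans (le_fmax (mem_insert_of_mem (fmax_mem hW)))
  obtain ⟨hSW, -, hbr⟩ := (quasiStrong_insert_iff hyW hW).1 hS
  have hz := fmin_mem hW
  have hR := pullbackTree_subset (N := N) (S := S) (φ := stretch a y₀ y₁ b) hT
  refine (quasiStrong_insert_iff (fun w hw => ha.trans_lt (hyW w hw)) hW).2
    ⟨quasiStrong_pullbackTree hT hb ha hy hS hSN (subset_insert _ _) hWy hSW, ?_, ?_⟩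
  all_goals rw [pullbackTree, level_prefixClosure (N := N)
    (fun t ht => (mem_level.1 (mem_filter.1 ht).1).2) (by omega)]
  · obtain ⟨π, hπ⟩ := (hS.2.1 _ (fmax_mem (insert_nonempty y₀ W)))
    rw [← image_filter_level_stretch ha hy hN hSN] at hπ
    obtain ⟨t, ht, -⟩ := mem_image.1 hπ
    exact ⟨_, mem_image_of_mem _ ht⟩
  · rw [forall_mem_image]
    intro t ht
    obtain ⟨htN, htS⟩ := mem_filter.1 ht
    have htlen := (mem_level.1 htN).2
    -- `t.take a` has the same extensions as the node `t.take a ++ 0 ⋯ 0` of `S` at level `y₀`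
    have hν : t.take a ++ replicate (y₀ - a) false ∈ level S y₀ := by
      rw [← take_stretch_eq_append_replicate ha hy (by omega) (b := b)]
      exact hS.1.take_mem_level (mem_level.2 ⟨htS, by rw [length_stretch ha hy (by omega), htlen]⟩)
        (by omega)
    refine (card_filter_prefix_image (T' := S) (ν := t.take a ++ replicate (y₀ - a) false)
      (level_pullbackTree ha hy hS hSN (mem_insert_of_mem hz) (hWy _ hz))
      ((injOn_stretch hT hb ha hy (hWy _ hz)).mono (coe_subset.2 (level_mono hR))) fun τ hτ =>
        (append_replicate_prefix_stretch_iff ha hy ((mem_level.1 hτ).2 ▸ hWy _ hz)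
          (by rw [length_take]; omega))).symm.trans (hbr _ hν)

theorem exists_color_of_isLeaf_pullbackTree {U : Finset (List Bool)} {M c : ℕ}
    {C : List Bool → ℕ} (hT : IsTree T) (hb : SeparatesSiblings T a y₁ b) (ha : a ≤ y₀)
    (hy : y₀ < y₁) (hN : y₁ ≤ N) (hNM : N ≤ M)
    (hUM : level U M = (level T M).image (stretch a y₀ y₁ b))
    (hleaf : ∀ σ, IsLeaf S σ → ∃ π ∈ level U M, σ <+: π ∧
      C (Function.invFunOn (stretch a y₀ y₁ b) (level T M) π) = c)
    {σ : List Bool} (hσ : IsLeaf (pullbackTree T (stretch a y₀ y₁ b) N S) σ) :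
    ∃ t ∈ level T M, σ <+: t ∧ C t = c := by
  obtain ⟨hσN, hσS⟩ := mem_filter.1 hσ.mem_of_prefixClosure
  obtain ⟨l, hl, hσl⟩ := exists_isLeaf hσS
  obtain ⟨π, hπ, hlπ, hc⟩ := hleaf l hl
  rw [hUM] at hπ
  obtain ⟨t, ht, rfl⟩ := mem_image.1 hπ
  have htM := (mem_level.1 ht).2
  have hσt : stretch a y₀ y₁ b σ <+: stretch a y₀ y₁ b t := hσl.trans hlπ
  rw [prefix_iff_of_injOn hT hσN ht hNM (injOn_stretch hT hb ha hy hN)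
    (by rw [length_stretch ha hy ((mem_level.1 hσN).2 ▸ hN), (mem_level.1 hσN).2])
    (stretch_take ha hy (by omega) hN)] at hσt
  rw [(injOn_stretch hT hb ha hy (hN.trans hNM)).leftInvOn_invFunOn ht] at hc
  exact ⟨t, ht, hσt, hc⟩

theorem exists_subtree_pullbackTree (hT : IsTree T) (hb : SeparatesSiblings T a y₁ b)
    (ha : a < y₀) (hy : y₀ < y₁) (hS : QuasiStrong Z S)
    (hSN : level S (fmax Z) ⊆ (level T (fmax Z)).image (stretch a y₀ y₁ b))
    (hZ : (Z.erase (fmin Z)).Nonempty) (hy₀Z : y₀ ≤ fmin Z) (hZy : ∀ z ∈ Z, z ≠ y₀ → y₁ ≤ z) :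
    ∃ R ⊆ T, QuasiStrong (lowerMin a Z) R ∧
      ∀ σ, IsLeaf R σ → IsLeaf (pullbackTree T (stretch a y₀ y₁ b) (fmax Z) S) σ := by
  have hsub := pullbackTree_subset (N := fmax Z) (S := S) (φ := stretch a y₀ y₁ b) hT
  rcases hy₀Z.eq_or_lt with rfl | hlt
  · refine ⟨_, hsub, ?_, fun σ hσ => hσ⟩
    have hZins : insert (fmin Z) (Z.erase (fmin Z)) = Z :=
      insert_erase (fmin_mem (hZ.mono (erase_subset _ _)))
    have := quasiStrong_pullbackTree_insert hT hb ha.le hy (W := Z.erase (fmin Z)) (hZins ▸ hS)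
      (by rwa [hZins]) hZ fun x hx => hZy x (mem_of_mem_erase hx) (ne_of_mem_erase hx)
    rwa [hZins] at this
  · have hZy' : ∀ z ∈ Z, y₁ ≤ z := fun z hz => hZy z hz (hlt.trans_le (fmin_le hz)).ne'
    obtain ⟨R, hR, hRZ, hRleaf⟩ :=
      (quasiStrong_pullbackTree hT hb ha.le hy hS hSN subset_rfl hZy' hS).exists_subtree_lowerMin
        (hZ.mono (erase_subset _ _)) (ha.trans hlt)
    exact ⟨R, hR.trans hsub, hRZ, hRleaf⟩

end Pullback

theorem persClause_lowerMin_of_lt {k a : ℕ} {Y Z : Finset ℕ} (hZY : Z ⊆ Y) (ha : a < fmin Y)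
    (hZ : (Z.erase (fmin Z)).Nonempty) (h : PersClause k Y Z) :
    PersClause k (lowerMin a Y) (lowerMin a Z) := by
  set V := Y.erase (fmin Y)
  have hZne := hZ.mono (erase_subset _ _)
  have hZV : Z.erase (fmin Z) ⊆ V := erase_fmin_subset_erase_fmin hZY hZne
  have hV : V.Nonempty := hZ.mono hZV
  have hZmax : fmax Z ∈ V := hZV (fmax_mem_erase_fmin hZ)
  have hVy : ∀ w ∈ V, fmin Y < w := fun w hw => fmin_lt_of_mem_erase hw
  have hy : fmin Y < fmin V := hVy _ (fmin_mem hV)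
  have hMY : fmax Y = fmax V := (fmax_erase_fmin hV).symm
  intro T hT C hC
  rw [show fmax (lowerMin a Y) = fmax V from
    fmax_insert_of_le hV ((ha.trans hy).le.trans (fmin_le (fmax_mem hV)))] at hC ⊢
  obtain ⟨hTV, -, hbr⟩ := (quasiStrong_insert_iff (fun w hw => ha.trans (hVy w hw)) hV).1 hT
  obtain ⟨b, hb⟩ := exists_separatesSiblings hT.1 (by omega) hbr
  have hUM := level_stretchTree (b := b) hTV ha.le hy (fmax_mem hV)
  have hinjM := injOn_stretch hT.1 hb ha.le hy (fmin_le (fmax_mem hV))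
  have hY : insert (fmin Y) V = Y := lowerMin_fmin (hZne.mono hZY)
  obtain ⟨c, hc, S, hSU, hS, hleaf⟩ := h _ (hY ▸ quasiStrong_stretchTree hT hV ha hy hb)
    (fun π => C (Function.invFunOn (stretch a (fmin Y) (fmin V) b) (level T (fmax V)) π)) (by
      rw [hMY, hUM, forall_mem_image]
      intro t ht
      rw [hinjM.leftInvOn_invFunOn ht]
      exact hC t ht)
  rw [hMY] at hleaf
  obtain ⟨R, hRT, hR, hRleaf⟩ := exists_subtree_pullbackTree hT.1 hb ha hy hS
    (level_stretchTree hTV ha.le hy hZmax ▸ level_mono hSU) hZ (fmin_le_fmin hZY hZne)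
    fun z hz hzY => fmin_le (mem_erase.2 ⟨hzY, hZY hz⟩)
  exact ⟨c, hc, R, hRT, hR, fun σ hσ => exists_color_of_isLeaf_pullbackTree hT.1 hb ha.le hy
    (fmin_le hZmax) (le_fmax hZmax) hUM hleaf (hRleaf σ hσ)⟩

theorem persClause_lowerMin_right {k a : ℕ} {Y Z : Finset ℕ} (hZ : Z.Nonempty)
    (ha : a < fmin Z) (h : PersClause k Y Z) : PersClause k Y (lowerMin a Z) := by
  intro T hT C hC
  obtain ⟨c, hc, S, hST, hS, hleaf⟩ := h T hT C hC
  obtain ⟨R, hRS, hR, hRleaf⟩ := hS.exists_subtree_lowerMin hZ ha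
  exact ⟨c, hc, R, hRS.trans hST, hR, fun σ hσ => hleaf σ (hRleaf σ hσ)⟩

theorem persClause_lowerMin {k a : ℕ} {Y Z : Finset ℕ} (hZY : Z ⊆ Y) (hZ : Z.Nonempty)
    (ha : a ≤ fmin Y) (h : PersClause k Y Z) : PersClause k (lowerMin a Y) (lowerMin a Z) := by
  rcases ha.eq_or_lt with rfl | ha
  · rw [lowerMin_fmin (hZ.mono hZY)]
    rcases (fmin_le_fmin hZY hZ).eq_or_lt with heq | hlt
    · rwa [heq, lowerMin_fmin hZ]
    · exact persClause_lowerMin_right hZ hlt h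
  rcases (Z.erase (fmin Z)).eq_empty_or_nonempty with hZ' | hZ'
  · rw [show lowerMin a Z = {a} by rw [lowerMin, hZ']; rfl]
    exact persClause_singleton (insert_nonempty _ _) (le_fmax (mem_insert_self _ _))
  · exact persClause_lowerMin_of_lt hZY ha hZ' h

theorem Persistent.nonempty {d n k : ℕ} (hn : 0 < n) :
    ∀ {i : ℕ} {Y : Finset ℕ}, Persistent d n k i Y → Y.Nonempty
  | 0, _, ⟨_, hf, _, hY⟩ =>
    let ⟨x, hx⟩ := (hf 0 hn).nonempty
    ⟨x, hY ▸ mem_biUnion.2 ⟨0, mem_range.2 hn, hx⟩⟩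
  | _ + 1, _, ⟨_, hZY, hZ, _⟩ => (hZ.nonempty hn).mono hZY

theorem persistent_lowerMin {d n k a : ℕ} (hn : 0 < n) (ha : 0 < a) :
    ∀ {i : ℕ} {Y : Finset ℕ}, Persistent d n k i Y → a ≤ fmin Y → Persistent d n k i (lowerMin a Y)
  | 0, _, hY, haY => omegaMulLarge_lowerMin hY hn ha haY
  | _ + 1, _, ⟨Z, hZY, hZ, hcl⟩, haY =>
    have hZne := hZ.nonempty hn
    ⟨lowerMin a Z, lowerMin_subset_lowerMin hZY hZne,
      persistent_lowerMin hn ha hZ (haY.trans (fmin_le_fmin hZY hZne)),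
      persClause_lowerMin hZY hZne haY hcl⟩

theorem persistent_singleton_zero {d k : ℕ} : ∀ i, Persistent d 1 k i {0}
  | 0 => omegaMulLarge_one_iff.2 (omegaLarge_singleton_zero d)
  | i + 1 => ⟨{0}, subset_rfl, persistent_singleton_zero i,
    persClause_singleton (singleton_nonempty 0) (Nat.zero_le _)⟩

theorem stmt13_general (d k i : ℕ) (hd : 1 ≤ d) (X : Finset ℕ)
    (h : Persistent d (fmin X + 1) k i X) :
    Persistent (d+1) 1 k i X := by
  induction i generalizing X with
  | zero => exact omegaMulLarge_succ_of_fmin hd h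
  | succ i ih =>
    obtain ⟨Y, hYX, hY, hcl⟩ := h
    have hYne := hY.nonempty (Nat.succ_pos _)
    have hXne := hYne.mono hYX
    rcases Nat.eq_zero_or_pos (fmin X) with hX | hX
    · exact ⟨{0}, singleton_subset_iff.2 (hX ▸ fmin_mem hXne), persistent_singleton_zero i,
        persClause_singleton hXne (Nat.zero_le _)⟩
    have haY := fmin_le_fmin hYX hYne
    refine ⟨lowerMin (fmin X) Y, lowerMin_fmin_subset hYX hYne, ih _ ?_, ?_⟩
    · rw [fmin_lowerMin haY]
      exact persistent_lowerMin (Nat.succ_pos _) hX hY haY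
    · simpa only [lowerMin_fmin hXne] using persClause_lowerMin hYX hYne le_rfl hcl

/-- If `X` is `(ω^d·(min X + 1), k, i)`-persistent then it is `(ω^{d+1}, k, i)`-persistent. -/
theorem stmt13 (d k i : ℕ) (hd : 1 ≤ d) (hk : 1 ≤ k) (X : Finset ℕ)
    (h : Persistent d (fmin X + 1) k i X) :
    Persistent (d+1) 1 k i X :=
  stmt13_general d k i hd X h
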